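/- Law of large numbers for the noiseless design matrix (step in the proof of Lemma 1): for every fixed t₀ ∈ (0,1), ( (I_p ⊗ H^{−1}) [ Σ_{i=1}^n Σ_{l=1}^m (𝐗_l(t_i) ⊗ T_i) K((t_i−t₀)/h) (𝐗_l(t_i) ⊗ T_i)ᵀ ] (I_p ⊗ H^{−1}) ) / (n h f(t₀)) → (Σ_{l=1}^m 𝐗_l(t₀)𝐗_l(t₀)ᵀ) ⊗ S entrywise in probability as n → ∞; equivalently, the sum equals n h f(t₀)[Σ_{l=1}^m 𝐗_l(t₀)𝐗_l(t₀)ᵀ ⊗ HSH](1+o_P(1)). -/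

import Mathlib

open MeasureTheory ProbabilityTheory Matrix Finset Filter

noncomputable section

/-- The `(q+1) × (q+1)` (with `q = 2`) weighted design matrix `T(s)ᵀW(s)T(s)` of local
polynomial regression of order `q = 2` centered at `s`, with kernel `K`, bandwidth `h`,
based on the first `n` of the time points `t`. -/
def TWT (K : ℝ → ℝ) (h : ℝ) (t : ℕ → ℝ) (n : ℕ) (s : ℝ) : Matrix (Fin 3) (Fin 3) ℝ :=
  fun a b => ∑ i ∈ range n, (t i - s) ^ (a : ℕ) * (t i - s) ^ (b : ℕ) * K ((t i - s) / h)

/-- The local polynomial weight function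
`W_ν^{(s)}(x) = e_νᵀ (T(s)ᵀW(s)T(s))⁻¹ (1, hx, …, h^q x^q)ᵀ K(x)` (with `q = 2`).
When `T(s)ᵀW(s)T(s)` is singular, `Matrix.inv` returns the junk value `0`; all
statements below only concern behaviour on the event (of probability tending to one)
that it is invertible. -/
def Wlp (K : ℝ → ℝ) (h : ℝ) (t : ℕ → ℝ) (n : ℕ) (s : ℝ) (ν : Fin 3) (x : ℝ) : ℝ :=
  ((TWT K h t n s)⁻¹.mulVec fun j => h ^ (j : ℕ) * x ^ (j : ℕ)) ν * K x

/-- First-stage local polynomial estimator of the curve (`ν = 0`) or its first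
derivative (`ν = 1`) at the point `s`, from data `Y₁,…,Y_n`:
`Σᵢ W_ν^{(s)}((tᵢ − s)/h) Yᵢ`. -/
def XhatGen (K : ℝ → ℝ) (h : ℝ) (t : ℕ → ℝ) (n : ℕ) (Y : ℕ → ℝ) (s : ℝ) (ν : Fin 3) : ℝ :=
  ∑ i ∈ range n, Wlp K h t n s ν ((t i - s) / h) * Y i

/-- The `(j,k)` entry of the `n × n` matrix `A_r`:
`(A_r)_{jk} = Σᵢ (tᵢ−t₀)^r W₀^{(tᵢ)}((tⱼ−tᵢ)/h) W₁^{(tᵢ)}((tₖ−tᵢ)/h) K((tᵢ−t₀)/h)`. -/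
def Amat (K : ℝ → ℝ) (h : ℝ) (t : ℕ → ℝ) (n : ℕ) (t₀ : ℝ) (r : ℕ) (j k : ℕ) : ℝ :=
  ∑ i ∈ range n, (t i - t₀) ^ r * Wlp K h t n (t i) 0 ((t j - t i) / h) *
    Wlp K h t n (t i) 1 ((t k - t i) / h) * K ((t i - t₀) / h)

/-- The `3 × 3` kernel moment matrix `S`, `S_{ab} = ∫ y^{a+b} K(y) dy` (0-based). -/
def Smat (K : ℝ → ℝ) : Matrix (Fin 3) (Fin 3) ℝ :=
  fun a b => ∫ y : ℝ, y ^ ((a : ℕ) + (b : ℕ)) * K y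

/-- The equivalent kernel `K_ν(x) = e_νᵀ S⁻¹ (1, x, x²)ᵀ K(x)` (with `q = 2`). -/
def Keq (K : ℝ → ℝ) (ν : Fin 3) (x : ℝ) : ℝ :=
  ((Smat K)⁻¹.mulVec fun j => x ^ (j : ℕ)) ν * K x

end

/-!
Write the normalised entry as `(n h)⁻¹ Σᵢ ψ(tᵢ) κ((tᵢ - t₀)/h)` with
`ψ = (Σₗ X_{dl} X_{d'l}) / f(t₀)` on `[0,1]` and `κ(y) = y^{a+b} K(y)`. After the substitution
`x = t₀ + h y`, the mean of each summand, divided by `h`, is `∫ f(t₀+hy) ψ(t₀+hy) κ(y) dy`,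
which tends to `f(t₀) ψ(t₀) ∫ κ` by dominated convergence; the same computation for the second
moment bounds the variance of the average by `O((n h)⁻¹)`. Chebyshev's inequality concludes,
since `n h → ∞`.
-/

open Topology

theorem ContinuousOn.measurable_of_eqOn_compl_zero {α E : Type*} [TopologicalSpace α]
    [MeasurableSpace α] [OpensMeasurableSpace α] [TopologicalSpace E] [MeasurableSpace E]
    [BorelSpace E] [Zero E] {F : α → E} {s : Set α} (hF : ContinuousOn F s)
    (hs : MeasurableSet s) (h0 : Set.EqOn F 0 sᶜ) : Measurable F := by
  classical
  have hpiece : s.piecewise F 0 = F := by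
    ext x
    by_cases hx : x ∈ s
    · exact Set.piecewise_eq_of_mem _ _ _ hx
    · rw [Set.piecewise_eq_of_notMem _ _ _ hx, h0 hx]
  exact hpiece ▸ hF.measurable_piecewise continuousOn_const hs

theorem ContinuousOn.exists_norm_le_of_eqOn_compl_zero {α E : Type*} [TopologicalSpace α]
    [SeminormedAddGroup E] {F : α → E} {s : Set α} (hF : ContinuousOn F s)
    (hs : IsCompact s) (h0 : Set.EqOn F 0 sᶜ) : ∃ C, ∀ x, ‖F x‖ ≤ C := by
  obtain ⟨C, hC⟩ := hs.exists_bound_of_continuousOn hF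
  refine ⟨max C 0, fun x => ?_⟩
  by_cases hx : x ∈ s
  · exact (hC x hx).trans (le_max_left _ _)
  · rw [h0 hx, Pi.zero_apply, norm_zero]
    exact le_max_right _ _

theorem integral_comp_sub_div (F : ℝ → ℝ) (t₀ c : ℝ) :
    ∫ x, F ((x - t₀) / c) = |c| * ∫ y, F y := by
  rw [integral_sub_right_eq_self (fun u => F (u / c)) t₀, Measure.integral_comp_div F c,
    smul_eq_mul]

theorem tendsto_inv_mul_integral_mul_comp_sub_div {ι : Type*} {l : Filter ι}
    [l.IsCountablyGenerated] {g κ : ℝ → ℝ} {t₀ : ℝ} {h : ι → ℝ}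
    (hg : Measurable g) (hg_bdd : ∃ C, ∀ x, ‖g x‖ ≤ C) (hgt₀ : ContinuousAt g t₀)
    (hκ : Integrable κ) (hpos : ∀ i, 0 < h i) (hh : Tendsto h l (𝓝 0)) :
    Tendsto (fun i => (h i)⁻¹ * ∫ x, g x * κ ((x - t₀) / h i)) l (𝓝 (g t₀ * ∫ y, κ y)) := by
  obtain ⟨C, hC⟩ := hg_bdd
  have hrescale : ∀ i, (h i)⁻¹ * ∫ x, g x * κ ((x - t₀) / h i)
      = ∫ y, g (t₀ + h i * y) * κ y := by
    intro i
    have hi := (hpos i).ne'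
    have hx : ∀ x, t₀ + h i * ((x - t₀) / h i) = x := fun x => by field_simp; ring
    have hsub := integral_comp_sub_div (fun y => g (t₀ + h i * y) * κ y) t₀ (h i)
    simp only [hx] at hsub
    rw [hsub, abs_of_pos (hpos i), inv_mul_cancel_left₀ hi]
  simp_rw [hrescale, ← integral_const_mul]
  refine tendsto_integral_filter_of_dominated_convergence (fun y => C * ‖κ y‖)
    (Eventually.of_forall fun i => ?_) (Eventually.of_forall fun i => ?_) (hκ.norm.const_mul C)
    (Eventually.of_forall fun y => ?_)
  · exact (hg.comp ((measurable_const_mul _).const_add t₀)).aestronglyMeasurable.mul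
      hκ.aestronglyMeasurable
  · exact Eventually.of_forall fun y => by
      rw [norm_mul]; exact mul_le_mul_of_nonneg_right (hC _) (norm_nonneg _)
  · have hpt : Tendsto (fun i => t₀ + h i * y) l (𝓝 t₀) := by
      simpa using tendsto_const_nhds.add (hh.mul_const y)
    exact ((hgt₀.tendsto.comp hpt).mul_const (κ y))

section

variable {Ω : Type*} [MeasurableSpace Ω] {μ : Measure Ω}

theorem tendstoInMeasure_const_of_tendsto_variance {ι : Type*} [IsFiniteMeasure μ] {l : Filter ι}
    {Z : ι → Ω → ℝ} {c : ℝ} (hZ : ∀ᶠ i in l, MemLp (Z i) 2 μ)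
    (hmean : Tendsto (fun i => μ[Z i]) l (𝓝 c))
    (hvar : Tendsto (fun i => variance (Z i) μ) l (𝓝 0)) :
    TendstoInMeasure μ Z l fun _ => c := by
  rw [tendstoInMeasure_iff_dist]
  intro ε hε
  have hε2 : 0 < ε / 2 := half_pos hε
  have hchebyshev : ∀ᶠ i in l, μ {ω | ε ≤ dist (Z i ω) c}
      ≤ ENNReal.ofReal (variance (Z i) μ / (ε / 2) ^ 2) := by
    filter_upwards [hZ, Metric.tendsto_nhds.mp hmean _ hε2] with i hZi hmeani
    refine (measure_mono fun ω hω => ?_).trans (meas_ge_le_variance_div_sq hZi hε2)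
    simp only [Set.mem_ofPred_eq, Real.dist_eq] at hω hmeani ⊢
    linarith [abs_sub_le (Z i ω) μ[Z i] c]
  have hbound : Tendsto (fun i => ENNReal.ofReal (variance (Z i) μ / (ε / 2) ^ 2)) l (𝓝 0) := by
    simpa using ENNReal.tendsto_ofReal (hvar.div_const ((ε / 2) ^ 2))
  exact tendsto_of_tendsto_of_tendsto_of_le_of_le' tendsto_const_nhds hbound
    (Eventually.of_forall fun _ => zero_le) hchebyshev

theorem integral_comp_eq_integral_mul_density {t : Ω → ℝ} {f : ℝ → ℝ}
    (ht : AEMeasurable t μ)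
    (hlaw : μ.map t = (volume : Measure ℝ).withDensity fun x => ENNReal.ofReal (f x))
    (hf : Measurable f) (hf0 : ∀ x, 0 ≤ f x) {G : ℝ → ℝ} (hG : Measurable G) :
    ∫ ω, G (t ω) ∂μ = ∫ x, f x * G x := by
  rw [← integral_map ht hG.aestronglyMeasurable, hlaw,
    integral_withDensity_eq_integral_toReal_smul hf.ennreal_ofReal
      (Eventually.of_forall fun _ => ENNReal.ofReal_lt_top)]
  simp only [ENNReal.toReal_ofReal (hf0 _), smul_eq_mul]

theorem ae_mem_of_map_eq_withDensity {t : Ω → ℝ} {f : ℝ → ℝ} (ht : AEMeasurable t μ)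
    (hlaw : μ.map t = (volume : Measure ℝ).withDensity fun x => ENNReal.ofReal (f x))
    {s : Set ℝ} (hs : MeasurableSet s) (hf : ∀ x ∉ s, f x = 0) :
    ∀ᵐ ω ∂μ, t ω ∈ s := by
  have hnull : μ.map t sᶜ = 0 := by
    rw [hlaw, withDensity_apply _ hs.compl,
      setLIntegral_congr_fun hs.compl fun x hx => by rw [hf x hx, ENNReal.ofReal_zero]]
    simp
  exact ae_of_ae_map ht (measure_eq_zero_iff_ae_notMem.mp hnull |>.mono fun _ hx => not_not.mp hx)

theorem tendstoInMeasure_smul_sum_range [IsProbabilityMeasure μ] {Y : ℕ → ℕ → Ω → ℝ}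
    {w m v : ℕ → ℝ} {c : ℝ}
    (hindep : ∀ n, iIndepFun (Y n) μ) (hY : ∀ n i, MemLp (Y n i) 2 μ)
    (hmean : ∀ n i, μ[Y n i] = m n) (hsq : ∀ n i, μ[Y n i ^ 2] ≤ v n)
    (hm : Tendsto (fun n : ℕ => n * w n * m n) atTop (𝓝 c))
    (hv : Tendsto (fun n : ℕ => n * w n ^ 2 * v n) atTop (𝓝 0)) :
    TendstoInMeasure μ (fun n => w n • ∑ i ∈ range n, Y n i) atTop fun _ => c := by
  refine tendstoInMeasure_const_of_tendsto_variance
    (Eventually.of_forall fun n => (memLp_finsetSum' _ fun i _ => hY n i).const_smul _) ?_ ?_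
  · refine hm.congr fun n => ?_
    simp only [Pi.smul_apply, Finset.sum_apply]
    rw [integral_smul, integral_finsetSum _ fun i _ => (hY n i).integrable one_le_two]
    simp only [hmean, Finset.sum_const, Finset.card_range, nsmul_eq_mul, smul_eq_mul]
    ring
  refine tendsto_of_tendsto_of_tendsto_of_le_of_le tendsto_const_nhds hv
    (fun n => variance_nonneg _ _) fun n => ?_
  have hvar_sum : variance (∑ i ∈ range n, Y n i) μ ≤ n * v n := by
    rw [IndepFun.variance_sum (fun i _ => hY n i) fun i _ j _ hij => (hindep n).indepFun hij]
    calc ∑ i ∈ range n, variance (Y n i) μ ≤ ∑ _i ∈ range n, v n :=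
          Finset.sum_le_sum fun i _ =>
            (variance_le_expectation_sq (hY n i).aestronglyMeasurable).trans (hsq n i)
      _ = n * v n := by simp only [Finset.sum_const, Finset.card_range, nsmul_eq_mul]
  calc variance (w n • ∑ i ∈ range n, Y n i) μ = w n ^ 2 * variance (∑ i ∈ range n, Y n i) μ :=
        variance_smul _ _ _
    _ ≤ w n ^ 2 * (n * v n) := mul_le_mul_of_nonneg_left hvar_sum (sq_nonneg _)
    _ = n * w n ^ 2 * v n := by ring

theorem tendstoInMeasure_kernel_average [IsProbabilityMeasure μ] {t : ℕ → Ω → ℝ}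
    {f ψ κ : ℝ → ℝ} {t₀ : ℝ}
    (ht : ∀ i, Measurable (t i)) (hindep : iIndepFun t μ)
    (hlaw : ∀ i, μ.map (t i) = (volume : Measure ℝ).withDensity fun x => ENNReal.ofReal (f x))
    (hf : Measurable f) (hf0 : ∀ x, 0 ≤ f x) (hf_bdd : ∃ C, ∀ x, ‖f x‖ ≤ C)
    (hft₀ : ContinuousAt f t₀)
    (hψ : Measurable ψ) (hψ_bdd : ∃ C, ∀ x, ‖ψ x‖ ≤ C) (hψt₀ : ContinuousAt ψ t₀)
    (hκ : Measurable κ) (hκ_bdd : ∃ C, ∀ y, ‖κ y‖ ≤ C) (hκ_int : Integrable κ)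
    {h : ℕ → ℝ} (hpos : ∀ n, 0 < h n) (hh : Tendsto h atTop (𝓝 0))
    (hnh : Tendsto (fun n : ℕ => (n : ℝ) * h n) atTop atTop) :
    TendstoInMeasure μ
      (fun (n : ℕ) ω => ((n : ℝ) * h n)⁻¹ * ∑ i ∈ range n, ψ (t i ω) * κ ((t i ω - t₀) / h n))
      atTop fun _ => f t₀ * ψ t₀ * ∫ y, κ y := by
  obtain ⟨Cf, hCf⟩ := hf_bdd
  obtain ⟨Cψ, hCψ⟩ := hψ_bdd
  obtain ⟨Cκ, hCκ⟩ := hκ_bdd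
  set G : ℕ → ℝ → ℝ := fun n x => ψ x * κ ((x - t₀) / h n)
  have hG : ∀ n, Measurable (G n) := fun n =>
    hψ.mul (hκ.comp ((measurable_id.sub_const t₀).div_const (h n)))
  have hmean_eq : ∀ n i, μ[G n ∘ t i] = ∫ x, (f x * ψ x) * κ ((x - t₀) / h n) := fun n i =>
    (integral_comp_eq_integral_mul_density (ht i).aemeasurable (hlaw i) hf hf0 (hG n)).trans
      (by simp only [G, mul_assoc])
  have hsq_eq : ∀ n i, μ[(G n ∘ t i) ^ 2] = ∫ x, (f x * ψ x ^ 2) * κ ((x - t₀) / h n) ^ 2 :=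
    fun n i => (integral_comp_eq_integral_mul_density (ht i).aemeasurable (hlaw i) hf hf0
      ((hG n).pow_const 2)).trans (by simp only [G, mul_pow, mul_assoc])
  have hmean := tendsto_inv_mul_integral_mul_comp_sub_div (g := fun x => f x * ψ x) (hf.mul hψ)
    ⟨Cf * Cψ, fun x => norm_mul_le_of_le (hCf x) (hCψ x)⟩ (hft₀.mul hψt₀) hκ_int hpos hh
  have hsq := tendsto_inv_mul_integral_mul_comp_sub_div (g := fun x => f x * ψ x ^ 2)
    (κ := fun y => κ y ^ 2) (hf.mul (hψ.pow_const 2))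
    ⟨Cf * (Cψ * Cψ), fun x => norm_mul_le_of_le (hCf x) (by
      rw [sq]; exact norm_mul_le_of_le (hCψ x) (hCψ x))⟩
    (hft₀.mul (hψt₀.pow 2))
    (by simpa only [sq] using hκ_int.bdd_mul hκ.aestronglyMeasurable (Eventually.of_forall hCκ))
    hpos hh
  have hmean' : Tendsto (fun n : ℕ => n * ((n : ℝ) * h n)⁻¹ * ∫ x, (f x * ψ x) * κ ((x - t₀) / h n))
      atTop (𝓝 (f t₀ * ψ t₀ * ∫ y, κ y)) :=
    hmean.congr' ((eventually_ne_atTop 0).mono fun n hn => by field_simp)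
  have hsq' : Tendsto (fun n : ℕ => n * ((n : ℝ) * h n)⁻¹ ^ 2 *
      ∫ x, (f x * ψ x ^ 2) * κ ((x - t₀) / h n) ^ 2) atTop (𝓝 0) := by
    have hprod := hnh.inv_tendsto_atTop.mul hsq
    rw [zero_mul] at hprod
    refine hprod.congr' ((eventually_ne_atTop 0).mono fun n hn => ?_)
    simp only [Pi.inv_apply]
    field_simp
  have hlim := tendstoInMeasure_smul_sum_range (w := fun n => ((n : ℝ) * h n)⁻¹)
    (fun n => hindep.comp (fun _ => G n) fun _ => hG n)
    (fun n i => MemLp.of_bound ((hG n).comp (ht i)).aestronglyMeasurable (Cψ * Cκ)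
      (Eventually.of_forall fun ω => norm_mul_le_of_le (hCψ _) (hCκ _)))
    hmean_eq (fun n i => (hsq_eq n i).le) hmean' hsq'
  convert hlim using 1
  ext n ω
  simp only [Pi.smul_apply, Finset.sum_apply, Function.comp_apply, smul_eq_mul, G]

end

theorem sum_sum_mul_pow_div_eq_inv_mul_sum {ι ι' : Type*} {s : Finset ι} {s' : Finset ι'}
    {g : ι → ι' → ℝ} {u : ι → ℝ} {K : ℝ → ℝ} {k : ℕ} {n h c : ℝ} (hh : h ≠ 0) (hc : c ≠ 0) :
    (∑ i ∈ s, ∑ l ∈ s', g i l * u i ^ k * K (u i / h)) / (n * h ^ (k + 1) * c)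
      = (n * h)⁻¹ * ∑ i ∈ s, (c⁻¹ * ∑ l ∈ s', g i l) * ((u i / h) ^ k * K (u i / h)) := by
  have hterm : ∀ i, (c⁻¹ * ∑ l ∈ s', g i l) * ((u i / h) ^ k * K (u i / h))
      = (∑ l ∈ s', g i l * u i ^ k * K (u i / h)) * (h ^ k * c)⁻¹ := fun i => by
    rw [Finset.sum_mul, Finset.mul_sum, Finset.sum_mul, div_pow]
    refine Finset.sum_congr rfl fun l _ => ?_
    field_simp
  rw [Finset.sum_congr rfl fun i _ => hterm i, ← Finset.sum_mul, div_eq_mul_inv]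
  ring

/-- Entry `(a, b)` of the matrix statement, rows and columns of `ℝᵖ ⊗ ℝ³` indexed by
`Fin p × Fin 3`. -/
theorem noiseless_design_matrix_lln_general
    {Ω : Type*} [MeasurableSpace Ω] (μ : Measure Ω) [IsProbabilityMeasure μ]
    (K f : ℝ → ℝ) (h : ℕ → ℝ) (t : ℕ → Ω → ℝ) (t₀ : ℝ)
    -- the kernel is a continuous, bounded, symmetric probability density on [−1,1]
    (hKcont : Continuous K)
    (hKsupp : ∀ x, x ∉ Set.Icc (-1 : ℝ) 1 → K x = 0)
    -- the design density f is C¹ on [0,1], bounded away from zero there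
    (hfdiff : ContDiffOn ℝ 1 f (Set.Icc 0 1)) (hfnonneg : ∀ x, 0 ≤ f x)
    (hfsupp : ∀ x, x ∉ Set.Icc (0 : ℝ) 1 → f x = 0)
    (hfbdd : ∃ c > 0, ∀ x ∈ Set.Icc (0 : ℝ) 1, c ≤ f x)
    -- bandwidth: h → 0 and n h³ → ∞
    (hhpos : ∀ n, 0 < h n) (hh0 : Filter.Tendsto h Filter.atTop (nhds 0))
    (hnh : Filter.Tendsto (fun n : ℕ => (n : ℝ) * h n) Filter.atTop Filter.atTop)
    -- the time points are i.i.d. with density f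
    (htmeas : ∀ i, Measurable (t i))
    (htindep : iIndepFun t μ)
    (htlaw : ∀ i, Measure.map (t i) μ
      = (volume : Measure ℝ).withDensity fun x => ENNReal.ofReal (f x))
    (ht₀ : t₀ ∈ Set.Ioo (0 : ℝ) 1)
    -- fixed continuous trajectories
    {p m : ℕ} (X : Fin p → Fin m → ℝ → ℝ)
    (hX : ∀ d l, ContinuousOn (X d l) (Set.Icc 0 1)) :
    ∀ a b : Fin p × Fin 3,
      TendstoInMeasure μ
        (fun (n : ℕ) ω =>
          (∑ i ∈ range n, ∑ l : Fin m,
              X a.1 l (t i ω) * X b.1 l (t i ω)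
                * (t i ω - t₀) ^ ((a.2 : ℕ) + (b.2 : ℕ)) * K ((t i ω - t₀) / h n))
          / ((n : ℝ) * h n ^ (1 + (a.2 : ℕ) + (b.2 : ℕ)) * f t₀))
        Filter.atTop
        (fun _ => (∑ l : Fin m, X a.1 l t₀ * X b.1 l t₀) * Smat K a.2 b.2) := by
  intro a b
  set k := (a.2 : ℕ) + (b.2 : ℕ)
  have hnhds : Set.Icc (0 : ℝ) 1 ∈ 𝓝 t₀ := Icc_mem_nhds ht₀.1 ht₀.2
  have hfcont : ContinuousOn f (Set.Icc 0 1) := hfdiff.continuousOn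
  have hft₀ : f t₀ ≠ 0 := by
    obtain ⟨c, hc, hcf⟩ := hfbdd
    exact (hc.trans_le (hcf t₀ (Set.Ioo_subset_Icc_self ht₀))).ne'
  set φ : ℝ → ℝ := fun x => ∑ l, X a.1 l x * X b.1 l x
  -- The trajectories are arbitrary off `[0,1]`, where almost surely no `tᵢ` lies.
  set ψ : ℝ → ℝ := (Set.Icc 0 1).indicator fun x => (f t₀)⁻¹ * φ x
  have hψ : ContinuousOn ψ (Set.Icc 0 1) :=
    (continuousOn_const.mul (continuousOn_finsetSum _ fun l _ => (hX a.1 l).mul (hX b.1 l))).congr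
      fun x hx => Set.indicator_of_mem hx _
  have hψ0 : Set.EqOn ψ 0 (Set.Icc 0 1)ᶜ := fun x hx => Set.indicator_of_notMem hx _
  set κ : ℝ → ℝ := fun y => y ^ k * K y
  have hκ : Continuous κ := (continuous_pow k).mul hKcont
  have hκc : HasCompactSupport κ := (HasCompactSupport.intro isCompact_Icc hKsupp).mul_left
  have hlim := tendstoInMeasure_kernel_average htmeas htindep htlaw
    (hfcont.measurable_of_eqOn_compl_zero measurableSet_Icc hfsupp) hfnonneg
    (hfcont.exists_norm_le_of_eqOn_compl_zero isCompact_Icc hfsupp) (hfcont.continuousAt hnhds)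
    (hψ.measurable_of_eqOn_compl_zero measurableSet_Icc hψ0)
    (hψ.exists_norm_le_of_eqOn_compl_zero isCompact_Icc hψ0) (hψ.continuousAt hnhds)
    hκ.measurable (hκ.bounded_above_of_compact_support hκc)
    (hκ.integrable_of_hasCompactSupport hκc) hhpos hh0 hnh
  have hψt₀ : f t₀ * ψ t₀ = φ t₀ := by
    simp only [ψ, Set.indicator_of_mem (Set.Ioo_subset_Icc_self ht₀), mul_inv_cancel_left₀ hft₀]
  rw [hψt₀] at hlim
  refine hlim.congr_left fun n => ?_
  filter_upwards [ae_all_iff.2 fun i => ae_mem_of_map_eq_withDensity (htmeas i).aemeasurable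
    (htlaw i) measurableSet_Icc hfsupp] with ω hω
  rw [show 1 + (a.2 : ℕ) + b.2 = k + 1 by omega,
    sum_sum_mul_pow_div_eq_inv_mul_sum (hhpos n).ne' hft₀]
  refine congrArg _ (Finset.sum_congr rfl fun i _ => ?_)
  simp only [ψ, κ, φ, Set.indicator_of_mem (hω i)]

/-- **Law of large numbers for the noiseless design matrix (step in the proof of
Lemma 1).**  For every fixed `t₀ ∈ (0,1)`, entrywise in probability,
`(I_p ⊗ H⁻¹)[Σᵢ Σₗ (𝐗_l(tᵢ) ⊗ Tᵢ) K((tᵢ−t₀)/h) (𝐗_l(tᵢ) ⊗ Tᵢ)ᵀ](I_p ⊗ H⁻¹) / (n h f(t₀))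
  → (Σₗ 𝐗_l(t₀)𝐗_l(t₀)ᵀ) ⊗ S`.
The `((d,a),(d',b))` entry of the left-hand side is
`Σᵢ Σₗ X_{dl}(tᵢ) X_{d'l}(tᵢ) (tᵢ−t₀)^{a+b} K((tᵢ−t₀)/h) / (n h^{1+a+b} f(t₀))` and the
corresponding entry of the right-hand side is `(Σₗ X_{dl}(t₀)X_{d'l}(t₀)) S_{ab}`. -/
theorem noiseless_design_matrix_lln
    {Ω : Type*} [MeasurableSpace Ω] (μ : Measure Ω) [IsProbabilityMeasure μ]
    (K f : ℝ → ℝ) (h : ℕ → ℝ) (t : ℕ → Ω → ℝ) (t₀ : ℝ)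
    -- the kernel is a continuous, bounded, symmetric probability density on [−1,1]
    (hKcont : Continuous K) (hKbdd : ∃ M, ∀ x, |K x| ≤ M)
    (hKnonneg : ∀ x, 0 ≤ K x) (hKsymm : ∀ x, K (-x) = K x)
    (hKone : (∫ x, K x) = 1) (hKsupp : ∀ x, x ∉ Set.Icc (-1 : ℝ) 1 → K x = 0)
    -- the design density f is C¹ on [0,1], bounded away from zero there
    (hfdiff : ContDiffOn ℝ 1 f (Set.Icc 0 1)) (hfnonneg : ∀ x, 0 ≤ f x)
    (hfsupp : ∀ x, x ∉ Set.Icc (0 : ℝ) 1 → f x = 0)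
    (hfbdd : ∃ c > 0, ∀ x ∈ Set.Icc (0 : ℝ) 1, c ≤ f x)
    (hfone : (∫ x, f x) = 1)
    -- bandwidth: h → 0 and n h³ → ∞
    (hhpos : ∀ n, 0 < h n) (hh0 : Filter.Tendsto h Filter.atTop (nhds 0))
    (hnh : Filter.Tendsto (fun n : ℕ => (n : ℝ) * h n) Filter.atTop Filter.atTop)
    -- the time points are i.i.d. with density f
    (htmeas : ∀ i, Measurable (t i))
    (htindep : iIndepFun t μ)
    (htlaw : ∀ i, Measure.map (t i) μ
      = (volume : Measure ℝ).withDensity fun x => ENNReal.ofReal (f x))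
    (ht₀ : t₀ ∈ Set.Ioo (0 : ℝ) 1)
    -- fixed continuous trajectories
    {p m : ℕ} (hp : 0 < p) (hm : 0 < m) (X : Fin p → Fin m → ℝ → ℝ)
    (hX : ∀ d l, ContinuousOn (X d l) (Set.Icc 0 1)) :
    ∀ a b : Fin p × Fin 3,
      TendstoInMeasure μ
        (fun (n : ℕ) ω =>
          (∑ i ∈ range n, ∑ l : Fin m,
              X a.1 l (t i ω) * X b.1 l (t i ω)
                * (t i ω - t₀) ^ ((a.2 : ℕ) + (b.2 : ℕ)) * K ((t i ω - t₀) / h n))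
          / ((n : ℝ) * h n ^ (1 + (a.2 : ℕ) + (b.2 : ℕ)) * f t₀))
        Filter.atTop
        (fun _ => (∑ l : Fin m, X a.1 l t₀ * X b.1 l t₀) * Smat K a.2 b.2) :=
  noiseless_design_matrix_lln_general μ K f h t t₀ hKcont hKsupp hfdiff hfnonneg hfsupp hfbdd hhpos
    hh0 hnh htmeas htindep htlaw ht₀ X hX
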